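/- arXiv:1306.0842 — 2 statements merged into one kernel-verified Lean document; each statement's English description precedes it below -/
import Mathlib

section
/- Let H be a Hilbert space, μ ∈ H the mean of an H-valued random variable with finite second moment, μ̂ the empirical mean of n i.i.d. samples, and Δ = E[‖μ̂ − μ‖²]. For f* ∈ H and α ∈ ℝ, define the shrinkage estimator μ̂_α = α f* + (1−α) μ̂ and its risk Δ_α = E[‖μ̂_α − μ‖²]. Then Δ_α = (Δ + ‖f* − μ‖²)(α − Δ/(Δ + ‖f* − μ‖²))² + Δ − Δ²/(Δ + ‖f* − μ‖²), provided Δ + ‖f* − μ‖² > 0. -/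
open MeasureTheory ProbabilityTheory
open scoped RealInnerProductSpace

/-!
Writing `α • f* + (1 - α) • μ̂ - μ = α • (f* - μ) + (1 - α) • (μ̂ - μ)` and using that the
empirical mean is unbiased, the cross term has zero expectation, so
`Δ_α = α² ‖f* - μ‖² + (1 - α)² Δ`; completing the square in `α` gives the decomposition.
-/

section

variable {Ω H : Type*} [MeasurableSpace Ω] {P : Measure Ω}
  [NormedAddCommGroup H] [InnerProductSpace ℝ H]

theorem integral_norm_add_sq_of_integral_eq_zero [IsProbabilityMeasure P] [CompleteSpace H]
    {Y : Ω → H} (hY : MemLp Y 2 P) (hY₀ : ∫ ω, Y ω ∂P = 0) (a : H) :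
    ∫ ω, ‖a + Y ω‖ ^ 2 ∂P = ‖a‖ ^ 2 + ∫ ω, ‖Y ω‖ ^ 2 ∂P := by
  have hYint : Integrable Y P := hY.integrable one_le_two
  have hcross_int : Integrable (fun ω => 2 * ⟪a, Y ω⟫) P := (hYint.const_inner a).const_mul 2
  have hlin_int : Integrable (fun ω => ‖a‖ ^ 2 + 2 * ⟪a, Y ω⟫) P :=
    (integrable_const _).add hcross_int
  have hcross : ∫ ω, 2 * ⟪a, Y ω⟫ ∂P = 0 := by
    rw [integral_const_mul, integral_inner hYint, hY₀, inner_zero_right, mul_zero]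
  simp_rw [norm_add_sq_real]
  rw [integral_add hlin_int (hY.integrable_norm_pow two_ne_zero),
    integral_add (integrable_const _) hcross_int, hcross,
    integral_const, probReal_univ, one_smul, add_zero]

theorem integral_norm_smul_add_smul_sub_sq [IsProbabilityMeasure P] [CompleteSpace H]
    {Z : Ω → H} (hZ : MemLp Z 2 P) {μ : H} (hZμ : ∫ ω, Z ω ∂P = μ) (f : H) (α : ℝ) :
    ∫ ω, ‖α • f + (1 - α) • Z ω - μ‖ ^ 2 ∂P
      = α ^ 2 * ‖f - μ‖ ^ 2 + (1 - α) ^ 2 * ∫ ω, ‖Z ω - μ‖ ^ 2 ∂P := by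
  have hY : MemLp (fun ω => (1 - α) • (Z ω - μ)) 2 P := (hZ.sub (memLp_const μ)).const_smul _
  have hY₀ : ∫ ω, (1 - α) • (Z ω - μ) ∂P = 0 := by
    rw [integral_smul, integral_sub (hZ.integrable one_le_two) (integrable_const μ), hZμ,
      integral_const, probReal_univ, one_smul, sub_self, smul_zero]
  have hsplit : ∀ ω, α • f + (1 - α) • Z ω - μ = α • (f - μ) + (1 - α) • (Z ω - μ) :=
    fun ω => by module
  simp_rw [hsplit]
  rw [integral_norm_add_sq_of_integral_eq_zero hY hY₀, ← integral_const_mul]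
  simp only [norm_smul, mul_pow, Real.norm_eq_abs, sq_abs]

theorem integral_inv_card_smul_sum {ι : Type*} [Fintype ι] [Nonempty ι] {Y : ι → Ω → H}
    (hY : ∀ i, Integrable (Y i) P) {μ : H} (hYμ : ∀ i, ∫ ω, Y i ω ∂P = μ) :
    ∫ ω, (Fintype.card ι : ℝ)⁻¹ • ∑ i, Y i ω ∂P = μ := by
  rw [integral_smul, integral_finsetSum _ fun i _ => hY i]
  simp only [hYμ, Finset.sum_const, Finset.card_univ]
  rw [← Nat.cast_smul_eq_nsmul ℝ, smul_smul, inv_mul_cancel₀ (by positivity), one_smul]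

end

theorem shrinkage_risk_decomposition_general
    {Ω : Type*} [MeasurableSpace Ω] (P : Measure Ω) [IsProbabilityMeasure P]
    {H : Type*} [NormedAddCommGroup H] [InnerProductSpace ℝ H] [CompleteSpace H]
    [MeasurableSpace H] [BorelSpace H]
    (n : ℕ) (hn : 0 < n)
    (X : Ω → H) (Xs : Fin n → Ω → H)
    (hmeas : ∀ i, Measurable (Xs i))
    (hX2 : MemLp X 2 P)
    (hident : ∀ i, Measure.map (Xs i) P = Measure.map X P)
    (μ : H) (hμ : μ = ∫ ω, X ω ∂P)
    (emp : Ω → H) (hemp : emp = fun ω => (n : ℝ)⁻¹ • (∑ i, Xs i ω))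
    (Δ : ℝ) (hΔ : Δ = ∫ ω, ‖emp ω - μ‖ ^ 2 ∂P)
    (fstar : H) (α : ℝ)
    (Δα : ℝ) (hΔα : Δα = ∫ ω, ‖α • fstar + (1 - α) • emp ω - μ‖ ^ 2 ∂P)
    (hpos : 0 < Δ + ‖fstar - μ‖ ^ 2) :
    Δα = (Δ + ‖fstar - μ‖ ^ 2) * (α - Δ / (Δ + ‖fstar - μ‖ ^ 2)) ^ 2
          + Δ - Δ ^ 2 / (Δ + ‖fstar - μ‖ ^ 2) := by
  have hdist : ∀ i, IdentDistrib (Xs i) X P P :=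
    fun i => ⟨(hmeas i).aemeasurable, hX2.1.aemeasurable, hident i⟩
  have hXs2 : ∀ i, MemLp (Xs i) 2 P := fun i => (hdist i).memLp_iff.2 hX2
  have hemp2 : MemLp emp 2 P := by
    rw [hemp]
    exact (memLp_finsetSum Finset.univ fun i _ => hXs2 i).const_smul (n : ℝ)⁻¹
  have : Nonempty (Fin n) := ⟨⟨0, hn⟩⟩
  have hunbiased : ∫ ω, emp ω ∂P = μ := by
    simpa [hemp] using integral_inv_card_smul_sum (fun i => (hXs2 i).integrable one_le_two)
      fun i => (hdist i).integral_eq.trans hμ.symm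
  rw [hΔα, integral_norm_smul_add_smul_sub_sq hemp2 hunbiased, ← hΔ]
  field_simp
  ring

/-- Risk decomposition of the shrinkage estimator `μ̂_α = α f* + (1-α) μ̂`:
`Δ_α = (Δ + ‖f*-μ‖²)(α - Δ/(Δ+‖f*-μ‖²))² + Δ - Δ²/(Δ+‖f*-μ‖²)`. -/
theorem shrinkage_risk_decomposition
    {Ω : Type*} [MeasurableSpace Ω] (P : Measure Ω) [IsProbabilityMeasure P]
    {H : Type*} [NormedAddCommGroup H] [InnerProductSpace ℝ H] [CompleteSpace H]
    [MeasurableSpace H] [BorelSpace H] [SecondCountableTopology H]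
    (n : ℕ) (hn : 0 < n)
    (X : Ω → H) (Xs : Fin n → Ω → H)
    (hmeas : ∀ i, Measurable (Xs i))
    (hX2 : MemLp X 2 P)
    (hindep : iIndepFun Xs P)
    (hident : ∀ i, Measure.map (Xs i) P = Measure.map X P)
    (μ : H) (hμ : μ = ∫ ω, X ω ∂P)
    (emp : Ω → H) (hemp : emp = fun ω => (n : ℝ)⁻¹ • (∑ i, Xs i ω))
    (Δ : ℝ) (hΔ : Δ = ∫ ω, ‖emp ω - μ‖ ^ 2 ∂P)
    (fstar : H) (α : ℝ)
    (Δα : ℝ) (hΔα : Δα = ∫ ω, ‖α • fstar + (1 - α) • emp ω - μ‖ ^ 2 ∂P)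
    (hpos : 0 < Δ + ‖fstar - μ‖ ^ 2) :
    Δα = (Δ + ‖fstar - μ‖ ^ 2) * (α - Δ / (Δ + ‖fstar - μ‖ ^ 2)) ^ 2
          + Δ - Δ ^ 2 / (Δ + ‖fstar - μ‖ ^ 2) :=
  shrinkage_risk_decomposition_general P n hn X Xs hmeas hX2 hident μ hμ emp hemp Δ hΔ fstar α Δα
    hΔα hpos
end

section
/- Let x₁,…,xₙ ∈ H (n ≥ 2), μ̂ = (1/n)∑ᵢxᵢ, and for 0 ≤ α < 1 let μ̂^{(−i)} = (1/(n−1))∑_{j≠i}xⱼ. Then the leave-one-out score LOOCV(α) = (1/n)∑ᵢ‖(1−α)μ̂^{(−i)} − xᵢ‖² equals (1/(n−1)²)[(−n² + α²n² + 2αn − 2α²n)ρ + (n² − 2αn + α²)ϱ], where ρ = (1/n²)∑_{i,j}⟨xᵢ,xⱼ⟩ and ϱ = (1/n)∑ᵢ‖xᵢ‖². -/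
open scoped RealInnerProductSpace

/-!
The leave-one-out mean is `(S - xᵢ)/(n-1)` with `S = ∑ⱼ xⱼ`, so every residual is
`(n-1)⁻¹ • ((1-α) • S - (n-α) • xᵢ)`: one fixed vector minus a multiple of `xᵢ`. Expanding the
squared norms and summing over `i`, the cross terms add up to `‖S‖² = n²ρ` and the last terms
to `nϱ`.
-/

section

open Finset

variable {E : Type*} [NormedAddCommGroup E] [InnerProductSpace ℝ E]

theorem norm_sum_sq_eq_sum_sum_inner {ι : Type*} (s : Finset ι) (x : ι → E) :
    ‖∑ i ∈ s, x i‖ ^ 2 = ∑ i ∈ s, ∑ j ∈ s, ⟪x i, x j⟫ := by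
  rw [← real_inner_self_eq_norm_sq, sum_inner]
  simp only [inner_sum]

theorem sum_norm_smul_sum_sub_smul_sq {ι : Type*} [Fintype ι] (x : ι → E) (a b : ℝ) :
    ∑ i, ‖a • ∑ j, x j - b • x i‖ ^ 2
      = (Fintype.card ι * a ^ 2 - 2 * a * b) * ‖∑ j, x j‖ ^ 2 + b ^ 2 * ∑ i, ‖x i‖ ^ 2 := by
  have hcross : ∑ i, ⟪a • ∑ j, x j, b • x i⟫ = a * b * ‖∑ j, x j‖ ^ 2 := by
    rw [← inner_sum, ← smul_sum, real_inner_smul_left, real_inner_smul_right,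
      real_inner_self_eq_norm_sq, mul_assoc]
  simp only [norm_sub_sq_real, sum_add_distrib, sum_sub_distrib, ← mul_sum, hcross,
    norm_smul, mul_pow, Real.norm_eq_abs, sq_abs, sum_const, card_univ, nsmul_eq_mul]
  ring

theorem smul_inv_smul_sum_erase_sub {ι : Type*} [Fintype ι] [DecidableEq ι] (x : ι → E)
    (i : ι) {m : ℝ} (hm : m - 1 ≠ 0) (α : ℝ) :
    (1 - α) • ((m - 1)⁻¹ • ∑ j ∈ univ.erase i, x j) - x i
      = (m - 1)⁻¹ • ((1 - α) • ∑ j, x j - (m - α) • x i) := by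
  rw [sum_erase_eq_sub (mem_univ i)]
  match_scalars <;> field_simp
  ring

end

theorem skmse_loocv_closed_form_general
    {H : Type*} [NormedAddCommGroup H] [InnerProductSpace ℝ H]
    (n : ℕ) (hn : 2 ≤ n) (x : Fin n → H) (α : ℝ)
    (μloo : Fin n → H)
    (hμloo : μloo = fun i => ((n : ℝ) - 1)⁻¹ • ∑ j ∈ Finset.univ.erase i, x j)
    (ρ ϱ : ℝ)
    (hρ : ρ = (n : ℝ)⁻¹ ^ 2 * ∑ i, ∑ j, ⟪x i, x j⟫)
    (hϱ : ϱ = (n : ℝ)⁻¹ * ∑ i, ‖x i‖ ^ 2) :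
    (n : ℝ)⁻¹ * ∑ i, ‖(1 - α) • μloo i - x i‖ ^ 2
      = ((n : ℝ) - 1)⁻¹ ^ 2 *
          ((-(n : ℝ) ^ 2 + α ^ 2 * (n : ℝ) ^ 2 + 2 * α * n - 2 * α ^ 2 * n) * ρ
            + ((n : ℝ) ^ 2 - 2 * α * n + α ^ 2) * ϱ) := by
  have hn2 : (2 : ℝ) ≤ n := by exact_mod_cast hn
  have hn0 : (n : ℝ) ≠ 0 := by positivity
  have hn1 : (n : ℝ) - 1 ≠ 0 := by linarith
  subst hμloo hρ hϱ
  simp only [smul_inv_smul_sum_erase_sub x _ hn1, norm_smul, mul_pow, Real.norm_eq_abs, sq_abs]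
  rw [← Finset.mul_sum, sum_norm_smul_sum_sub_smul_sq, norm_sum_sq_eq_sum_sum_inner,
    Fintype.card_fin]
  field_simp
  ring

/-- Closed form of the S-KMSE leave-one-out cross-validation score:
`LOOCV(α) = (1/(n-1)²)[(-n² + α²n² + 2αn - 2α²n)ρ + (n² - 2αn + α²)ϱ]`
with `ρ = (1/n²)∑ᵢⱼ⟨xᵢ,xⱼ⟩` and `ϱ = (1/n)∑ᵢ‖xᵢ‖²`. -/
theorem skmse_loocv_closed_form
    {H : Type*} [NormedAddCommGroup H] [InnerProductSpace ℝ H]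
    (n : ℕ) (hn : 2 ≤ n) (x : Fin n → H) (α : ℝ)
    (μhat : H) (hμhat : μhat = (n : ℝ)⁻¹ • ∑ i, x i)
    (μloo : Fin n → H)
    (hμloo : μloo = fun i => ((n : ℝ) - 1)⁻¹ • ∑ j ∈ Finset.univ.erase i, x j)
    (ρ ϱ : ℝ)
    (hρ : ρ = (n : ℝ)⁻¹ ^ 2 * ∑ i, ∑ j, ⟪x i, x j⟫)
    (hϱ : ϱ = (n : ℝ)⁻¹ * ∑ i, ‖x i‖ ^ 2) :
    (n : ℝ)⁻¹ * ∑ i, ‖(1 - α) • μloo i - x i‖ ^ 2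
      = ((n : ℝ) - 1)⁻¹ ^ 2 *
          ((-(n : ℝ) ^ 2 + α ^ 2 * (n : ℝ) ^ 2 + 2 * α * n - 2 * α ^ 2 * n) * ρ
            + ((n : ℝ) ^ 2 - 2 * α * n + α ^ 2) * ϱ) :=
  skmse_loocv_closed_form_general n hn x α μloo hμloo ρ ϱ hρ hϱ
end
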